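/- arXiv:2307.12542 — 3 statements merged into one kernel-verified Lean document; each statement's English description precedes it below -/
import Mathlib

section
/- Let Y be a type equipped with two adjacency relations adj_sub and adj_client, and let n ≥ 1. Suppose that for every pair D, D' ∈ Y with adj_client D D' there exists a finite sequence D = d₀, d₁, …, dₙ = D' in Y with adj_sub dᵢ dᵢ₊₁ for all 0 ≤ i < n. If a mechanism M : Y → (probability measures on Ω) is (ε,δ)-differentially private with respect to adj_sub, where ε > 0 and δ ≥ 0, then M is (n·ε, ((exp(n·ε) − 1)/(exp(ε) − 1))·δ)-differentially private with respect to adj_client. -/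
open MeasureTheory

/-- A mechanism `M` sending datasets to probability measures on `Ω` is
`(ε, δ)`-differentially private w.r.t. the adjacency relation `adj`. -/
def IsDP {X Ω : Type*} [MeasurableSpace Ω]
    (M : X → ProbabilityMeasure Ω) (adj : X → X → Prop) (ε δ : ℝ) : Prop :=
  ∀ S : Set Ω, MeasurableSet S → ∀ d d' : X, adj d d' →
    ((M d) S : ℝ) ≤ Real.exp ε * ((M d') S : ℝ) + δ

/-- Group privacy: if client-adjacent configurations are joined by a chain of `n`
sub-client-adjacent steps and `M` is `(ε, δ)`-DP at sub-client level, then `M` is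
`(n·ε, ((exp(n·ε) − 1)/(exp ε − 1))·δ)`-DP at client level. -/
theorem group_privacy {Y Ω : Type*} [MeasurableSpace Ω]
    (adj_sub adj_client : Y → Y → Prop) (n : ℕ) (hn : 1 ≤ n)
    (hchain : ∀ D D' : Y, adj_client D D' →
      ∃ d : ℕ → Y, d 0 = D ∧ d n = D' ∧ ∀ i < n, adj_sub (d i) (d (i + 1)))
    (M : Y → ProbabilityMeasure Ω) (ε δ : ℝ) (hε : 0 < ε) (hδ : 0 ≤ δ)
    (hM : IsDP M adj_sub ε δ) :
    IsDP M adj_client ((n : ℝ) * ε)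
      (((Real.exp ((n : ℝ) * ε) - 1) / (Real.exp ε - 1)) * δ) := by
  intro S hS D D' hadj
  obtain ⟨d, hd0, hdn, hsub⟩ := hchain D D' hadj
  have key : ∀ k ≤ n, ((M (d 0)) S : ℝ) ≤
      Real.exp ((k : ℝ) * ε) * ((M (d k)) S : ℝ) +
        (∑ i ∈ Finset.range k, Real.exp ((i : ℝ) * ε)) * δ := by
    intro k hk
    induction k with
    | zero => simp
    | succ k ih =>
      have hk' : k ≤ n := Nat.le_of_succ_le hk
      have step := hM S hS (d k) (d (k + 1)) (hsub k hk)
      calc ((M (d 0)) S : ℝ) ≤ Real.exp ((k : ℝ) * ε) * ((M (d k)) S : ℝ) +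
            (∑ i ∈ Finset.range k, Real.exp ((i : ℝ) * ε)) * δ := ih hk'
        _ ≤ Real.exp ((k : ℝ) * ε) *
              (Real.exp ε * ((M (d (k + 1))) S : ℝ) + δ) +
            (∑ i ∈ Finset.range k, Real.exp ((i : ℝ) * ε)) * δ := by
            gcongr
        _ = Real.exp (((k + 1 : ℕ) : ℝ) * ε) * ((M (d (k + 1))) S : ℝ) +
            (∑ i ∈ Finset.range (k + 1), Real.exp ((i : ℝ) * ε)) * δ := by
            rw [Finset.sum_range_succ]
            push_cast
            rw [show ((k : ℝ) + 1) * ε = (k : ℝ) * ε + ε by ring, Real.exp_add]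
            ring
  have hfin := key n le_rfl
  rw [hd0, hdn] at hfin
  have hsum : (∑ i ∈ Finset.range n, Real.exp ((i : ℝ) * ε)) =
      (Real.exp ((n : ℝ) * ε) - 1) / (Real.exp ε - 1) := by
    have h1 : Real.exp ε ≠ 1 := by
      have := Real.exp_lt_exp.2 hε
      simp only [Real.exp_zero] at this
      exact ne_of_gt this
    have h := geom_sum_eq h1 n
    calc (∑ i ∈ Finset.range n, Real.exp ((i : ℝ) * ε))
        = ∑ i ∈ Finset.range n, Real.exp ε ^ i := by
          refine Finset.sum_congr rfl fun i _ => ?_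
          rw [← Real.exp_nat_mul]
      _ = (Real.exp ε ^ n - 1) / (Real.exp ε - 1) := h
      _ = (Real.exp ((n : ℝ) * ε) - 1) / (Real.exp ε - 1) := by
          rw [← Real.exp_nat_mul]
  rw [hsum] at hfin
  exact hfin
end

section
/- Let X be a type with an adjacency relation adj, E a real normed vector space, η ≥ 0 a learning rate, and c ≥ 0 a gradient clip bound. For each step t ∈ ℕ let g t : X → E be a map whose sensitivity is at most 2c, i.e., for all d, d' ∈ X with adj d d', ‖g t d − g t d'‖ ≤ 2c. Define iterates θ : ℕ → X → E by θ (t+1) d = θ t d − η • g t d, with dataset-independent initialization, i.e., θ 0 d = θ 0 d' for all d, d' ∈ X. Then for all t ∈ ℕ and all d, d' ∈ X with adj d d', one has ‖θ t d − θ t d'‖ ≤ 2·η·t·c. -/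
/-- Cumulative sensitivity of DP-SGD: if every per-step (clipped, averaged) gradient
`g t` has sensitivity at most `2c` w.r.t. the adjacency relation `adj`, and the
iterates follow `θ (t+1) d = θ t d − η • g t d` with dataset-independent
initialization, then the model after `t` steps has sensitivity at most `2·η·t·c`. -/
theorem cumulative_sensitivity {X E : Type*} [NormedAddCommGroup E] [NormedSpace ℝ E]
    (adj : X → X → Prop) (η c : ℝ) (hη : 0 ≤ η) (hc : 0 ≤ c)
    (g : ℕ → X → E)
    (hg : ∀ t : ℕ, ∀ d d' : X, adj d d' → ‖g t d - g t d'‖ ≤ 2 * c)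
    (θ : ℕ → X → E)
    (hθ0 : ∀ d d' : X, θ 0 d = θ 0 d')
    (hθ : ∀ t : ℕ, ∀ d : X, θ (t + 1) d = θ t d - η • g t d) :
    ∀ t : ℕ, ∀ d d' : X, adj d d' → ‖θ t d - θ t d'‖ ≤ 2 * η * t * c := by
  intro t
  induction t with
  | zero =>
    intro d d' _
    simp [hθ0 d d']
  | succ t ih =>
    intro d d' h
    rw [hθ t d, hθ t d']
    have h1 : θ t d - η • g t d - (θ t d' - η • g t d')
        = (θ t d - θ t d') - η • (g t d - g t d') := by
      rw [smul_sub]; abel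
    rw [h1]
    calc ‖(θ t d - θ t d') - η • (g t d - g t d')‖
        ≤ ‖θ t d - θ t d'‖ + ‖η • (g t d - g t d')‖ := norm_sub_le _ _
      _ ≤ 2 * η * t * c + η * (2 * c) := by
          gcongr
          · exact ih d d' h
          · rw [norm_smul, Real.norm_of_nonneg hη]
            exact mul_le_mul_of_nonneg_left (hg t d d' h) hη
      _ = 2 * η * (t + 1 : ℕ) * c := by push_cast; ring
end

section
/- Let E be a finite-dimensional real inner product space, F : E → ℝ differentiable with gradient ∇F, and β, μ ≥ 0 real numbers such that for all u, v ∈ E: ‖∇F(u) − ∇F(v)‖ ≤ β‖u − v‖ (β-smoothness) and ‖∇F(u) − ∇F(v)‖ ≥ μ‖u − v‖ (a consequence of μ-strong convexity). Let η ≥ 0 and K > 0, and set a := 1 − 2ηβ + η²μ², assuming a ≥ 0 and a ≠ 1. On a probability space Ω let (N_t)_{t∈ℕ} be square-integrable random vectors in E with E[N_t] = 0 and E‖N_t‖² = σ² for each t, and such that for each t, N_t is independent of (N_0, …, N_{t−1}). Define the noiseless iterates θ : ℕ → E by θ_{t+1} = θ_t − η·∇F(θ_t), and the noisy iterates θ̃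 : ℕ → Ω → E by θ̃_0 = θ_0 (constant) and θ̃_{t+1} = θ̃_t − η·∇F(θ̃_t) + (η/K)·N_t. Then for all t ∈ ℕ, E‖θ̃_t − θ_t‖² ≥ ((a^t − 1)/(a − 1)) · (η²σ²/K²). -/
open MeasureTheory ProbabilityTheory RealInnerProductSpace

/-! Write `d_t = θ̃_t − θ_t`. One step gives `d_{t+1} = (d_t − η (G θ̃_t − G θ_t)) + (η/K) N_t`,
and the first summand is a measurable function of `N_0, …, N_{t−1}`, hence independent of the
centred `N_t`; the cross term therefore has mean zero and
`E‖d_{t+1}‖² = E‖d_t − η (G θ̃_t − G θ_t)‖² + η²σ²/K²`. Pointwise, `⟪d, g⟫ ≤ β‖d‖²` and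
`‖g‖ ≥ μ‖d‖` give `‖d − η g‖² ≥ a‖d‖²`, so `e_t = E‖d_t‖²` satisfies `e_{t+1} ≥ a e_t + η²σ²/K²`
with `e_0 = 0`, and unrolling this recursion produces the geometric sum. -/

theorem geom_sum_mul_le_of_le_mul_add {e : ℕ → ℝ} {a c : ℝ} (ha : 0 ≤ a) (he₀ : 0 ≤ e 0)
    (he : ∀ t, a * e t + c ≤ e (t + 1)) (t : ℕ) :
    (∑ i ∈ Finset.range t, a ^ i) * c ≤ e t := by
  induction t with
  | zero => simpa using he₀
  | succ t ih =>
    rw [geom_sum_succ]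
    nlinarith [he t, mul_le_mul_of_nonneg_left ih ha]

theorem mul_norm_sq_le_norm_sub_smul_sq {E : Type*} [NormedAddCommGroup E]
    [InnerProductSpace ℝ E] {d g : E} {β μ η : ℝ} (hμ : 0 ≤ μ) (hη : 0 ≤ η)
    (hlow : μ * ‖d‖ ≤ ‖g‖) (hup : ‖g‖ ≤ β * ‖d‖) :
    (1 - 2 * η * β + η ^ 2 * μ ^ 2) * ‖d‖ ^ 2 ≤ ‖d - η • g‖ ^ 2 := by
  have hinner : η * ⟪d, g⟫ ≤ η * (β * ‖d‖ ^ 2) := by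
    gcongr
    calc ⟪d, g⟫ ≤ ‖d‖ * ‖g‖ := real_inner_le_norm d g
      _ ≤ ‖d‖ * (β * ‖d‖) := by gcongr
      _ = β * ‖d‖ ^ 2 := by ring
  have hsq : η ^ 2 * (μ * ‖d‖) ^ 2 ≤ η ^ 2 * ‖g‖ ^ 2 := by gcongr
  rw [norm_sub_sq_real, real_inner_smul_right, norm_smul, Real.norm_eq_abs, mul_pow, sq_abs]
  nlinarith

theorem LipschitzWith.memLp_comp {α E F : Type*} [MeasurableSpace α] {μ : Measure α}
    [IsFiniteMeasure μ] [NormedAddCommGroup E] [NormedAddCommGroup F] {K : NNReal} {g : E → F}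
    (hg : LipschitzWith K g) {p : ENNReal} {f : α → E} (hf : MemLp f p μ) :
    MemLp (g ∘ f) p μ := by
  refine ((hf.norm.const_mul K).add (memLp_const ‖g 0‖)).of_le
    (hg.continuous.comp_aestronglyMeasurable hf.1) (Filter.Eventually.of_forall fun ω => ?_)
  have h := hg.norm_sub_le (f ω) 0
  rw [sub_zero] at h
  calc ‖g (f ω)‖ ≤ ‖g 0‖ + ‖g (f ω) - g 0‖ := norm_le_norm_add_norm_sub' _ _
    _ ≤ ‖K * ‖f ω‖ + ‖g 0‖‖ := by
      rw [Real.norm_of_nonneg (by positivity)]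
      linarith

theorem exists_measurable_eq_comp_past {Ω α β : Type*} [MeasurableSpace α] [MeasurableSpace β]
    {T : α → β → α} (hT : Measurable (Function.uncurry T)) {X : ℕ → Ω → α} {N : ℕ → Ω → β}
    {x₀ : α} (hX₀ : ∀ ω, X 0 ω = x₀) (hX : ∀ t ω, X (t + 1) ω = T (X t ω) (N t ω)) (t : ℕ) :
    ∃ φ : (Fin t → β) → α, Measurable φ ∧ ∀ ω, X t ω = φ (fun i => N i ω) := by
  induction t with
  | zero => exact ⟨fun _ => x₀, measurable_const, hX₀⟩
  | succ t ih =>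
    obtain ⟨φ, hφ, hXφ⟩ := ih
    refine ⟨fun n => T (φ (n ∘ Fin.castSucc)) (n (Fin.last t)), ?_, fun ω => ?_⟩
    · exact hT.comp ((hφ.comp (measurable_pi_lambda _ fun i => measurable_pi_apply _)).prodMk
        (measurable_pi_apply _))
    · simp [hX, hXφ, Function.comp_def]

theorem indepFun_of_recursion {Ω α β : Type*} [MeasurableSpace Ω] {P : Measure Ω}
    [MeasurableSpace α] [MeasurableSpace β]
    {T : α → β → α} (hT : Measurable (Function.uncurry T)) {X : ℕ → Ω → α} {N : ℕ → Ω → β}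
    {x₀ : α} (hX₀ : ∀ ω, X 0 ω = x₀) (hX : ∀ t ω, X (t + 1) ω = T (X t ω) (N t ω))
    (hN : ∀ t : ℕ, IndepFun (N t) (fun ω (i : Fin t) => N i ω) P) (t : ℕ) :
    IndepFun (X t) (N t) P := by
  obtain ⟨φ, hφ, hXφ⟩ := exists_measurable_eq_comp_past hT hX₀ hX t
  rw [funext hXφ]
  exact ((hN t).comp measurable_id hφ).symm

theorem integral_norm_add_sq_of_indepFun {Ω E : Type*} [MeasurableSpace Ω] {P : Measure Ω}
    [IsFiniteMeasure P] [NormedAddCommGroup E] [InnerProductSpace ℝ E] [CompleteSpace E]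
    [MeasurableSpace E] [BorelSpace E] {X Y : Ω → E} (hXY : IndepFun X Y P)
    (hX : MemLp X 2 P) (hY : MemLp Y 2 P) (hY₀ : ∫ ω, Y ω ∂P = 0) :
    ∫ ω, ‖X ω + Y ω‖ ^ 2 ∂P = ∫ ω, ‖X ω‖ ^ 2 ∂P + ∫ ω, ‖Y ω‖ ^ 2 ∂P := by
  have hX₁ := hX.integrable one_le_two
  have hY₁ := hY.integrable one_le_two
  have hcross : ∫ ω, ⟪X ω, Y ω⟫ ∂P = 0 :=
    (hXY.integral_bilin hX₁ hY₁ (innerSL ℝ)).trans (by simp [hY₀])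
  have hcross₁ : Integrable (fun ω => 2 * ⟪X ω, Y ω⟫) P :=
    (hXY.integrable_bilin hX₁ hY₁ (innerSL ℝ)).const_mul 2
  have hsum₁ : Integrable (fun ω => ‖X ω‖ ^ 2 + 2 * ⟪X ω, Y ω⟫) P :=
    hX.norm.integrable_sq.add hcross₁
  simp_rw [norm_add_sq_real]
  rw [integral_add hsum₁ hY.norm.integrable_sq,
    integral_add hX.norm.integrable_sq hcross₁, integral_const_mul, hcross, mul_zero, add_zero]

theorem mul_integral_norm_sub_sq_add_le_of_indepFun {Ω E : Type*} [MeasurableSpace Ω]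
    {P : Measure Ω} [IsFiniteMeasure P] [NormedAddCommGroup E] [InnerProductSpace ℝ E]
    [CompleteSpace E] [SecondCountableTopology E] [MeasurableSpace E] [BorelSpace E]
    {G : E → E} {β μ η : ℝ} (hμ : 0 ≤ μ) (hη : 0 ≤ η)
    (hsmooth : ∀ u v : E, ‖G u - G v‖ ≤ β * ‖u - v‖)
    (hconv : ∀ u v : E, μ * ‖u - v‖ ≤ ‖G u - G v‖)
    {X Z : Ω → E} (x : E) (hX : MemLp X 2 P) (hZ : MemLp Z 2 P) (hXZ : IndepFun X Z P)
    (hZ₀ : ∫ ω, Z ω ∂P = 0) :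
    (1 - 2 * η * β + η ^ 2 * μ ^ 2) * ∫ ω, ‖X ω - x‖ ^ 2 ∂P + ∫ ω, ‖Z ω‖ ^ 2 ∂P ≤
      ∫ ω, ‖(X ω - η • G (X ω) + Z ω) - (x - η • G x)‖ ^ 2 ∂P := by
  have hG : LipschitzWith β.toNNReal G :=
    LipschitzWith.of_dist_le' (by simpa only [dist_eq_norm] using hsmooth)
  let step : E → E := fun y => (y - x) - η • (G y - G x)
  have hstep : Measurable step := by
    have := hG.continuous.measurable
    fun_prop
  have hM : MemLp (step ∘ X) 2 P :=
    (hX.sub (memLp_const x)).sub (((hG.memLp_comp hX).sub (memLp_const (G x))).const_smul η)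
  have hsplit : ∀ ω, (X ω - η • G (X ω) + Z ω) - (x - η • G x) = step (X ω) + Z ω := by
    intro ω
    simp only [step, smul_sub]
    abel
  have hpyth : ∫ ω, ‖step (X ω) + Z ω‖ ^ 2 ∂P = ∫ ω, ‖step (X ω)‖ ^ 2 ∂P + ∫ ω, ‖Z ω‖ ^ 2 ∂P :=
    integral_norm_add_sq_of_indepFun (hXZ.comp hstep measurable_id) hM hZ hZ₀
  simp_rw [hsplit, hpyth, ← integral_const_mul]
  gcongr ?_ + _
  refine integral_mono ((hX.sub (memLp_const x)).norm.integrable_sq.const_mul _)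
    hM.norm.integrable_sq fun ω => ?_
  exact mul_norm_sq_le_norm_sub_smul_sq hμ hη (hconv _ _) (hsmooth _ _)

theorem cumulative_variance_general
    {E : Type*} [NormedAddCommGroup E] [InnerProductSpace ℝ E]
    [FiniteDimensional ℝ E] [MeasurableSpace E] [BorelSpace E]
    {Ω : Type*} [MeasurableSpace Ω] (P : Measure Ω) [IsProbabilityMeasure P]
    (G : E → E)
    (β μ : ℝ) (hμ : 0 ≤ μ)
    (hsmooth : ∀ u v : E, ‖G u - G v‖ ≤ β * ‖u - v‖)
    (hconv : ∀ u v : E, μ * ‖u - v‖ ≤ ‖G u - G v‖)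
    (η : ℝ) (hη : 0 ≤ η) (K : ℝ)
    (a : ℝ) (ha : a = 1 - 2 * η * β + η ^ 2 * μ ^ 2) (ha0 : 0 ≤ a) (ha1 : a ≠ 1)
    (σ : ℝ) (N : ℕ → Ω → E)
    (hNmem : ∀ t : ℕ, MemLp (N t) 2 P)
    (hNmean : ∀ t : ℕ, ∫ ω, N t ω ∂P = 0)
    (hNvar : ∀ t : ℕ, ∫ ω, ‖N t ω‖ ^ 2 ∂P = σ ^ 2)
    (hNindep : ∀ t : ℕ, IndepFun (N t) (fun ω => fun i : Fin t => N i ω) P)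
    (θ : ℕ → E) (hθ : ∀ t : ℕ, θ (t + 1) = θ t - η • G (θ t))
    (θt : ℕ → Ω → E) (hθt0 : ∀ ω : Ω, θt 0 ω = θ 0)
    (hθt : ∀ t : ℕ, ∀ ω : Ω,
      θt (t + 1) ω = θt t ω - η • G (θt t ω) + (η / K) • N t ω) :
    ∀ t : ℕ, ((a ^ t - 1) / (a - 1)) * (η ^ 2 * σ ^ 2 / K ^ 2) ≤
      ∫ ω, ‖θt t ω - θ t‖ ^ 2 ∂P := by
  have hG : LipschitzWith β.toNNReal G :=
    LipschitzWith.of_dist_le' (by simpa only [dist_eq_norm] using hsmooth)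
  have hmem : ∀ t, MemLp (θt t) 2 P := by
    intro t
    induction t with
    | zero => simpa only [funext hθt0] using memLp_const (θ 0)
    | succ t ih =>
      rw [funext (hθt t)]
      exact (ih.sub ((hG.memLp_comp ih).const_smul η)).add ((hNmem t).const_smul _)
  have hindep : ∀ t, IndepFun (θt t) (N t) P := by
    refine indepFun_of_recursion (T := fun x n => x - η • G x + (η / K) • n) ?_ hθt0 hθt hNindep
    have := hG.continuous.measurable
    fun_prop
  have hnoise : ∀ t, ∫ ω, ‖(η / K) • N t ω‖ ^ 2 ∂P = η ^ 2 * σ ^ 2 / K ^ 2 := by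
    intro t
    simp_rw [norm_smul, mul_pow, Real.norm_eq_abs, sq_abs]
    rw [integral_const_mul, hNvar, div_pow]
    ring
  have hvar_step : ∀ t, a * ∫ ω, ‖θt t ω - θ t‖ ^ 2 ∂P + η ^ 2 * σ ^ 2 / K ^ 2 ≤
      ∫ ω, ‖θt (t + 1) ω - θ (t + 1)‖ ^ 2 ∂P := by
    intro t
    have hnoise_indep := (hindep t).comp measurable_id (measurable_const_smul (η / K))
    simpa only [ha, hθt, hθ, hnoise] using
      mul_integral_norm_sub_sq_add_le_of_indepFun hμ hη hsmooth hconv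
        (Z := fun ω => (η / K) • N t ω) (θ t) (hmem t) ((hNmem t).const_smul (η / K))
        hnoise_indep (by rw [integral_smul, hNmean, smul_zero])
  intro t
  rw [← geom_sum_eq ha1]
  exact geom_sum_mul_le_of_le_mul_add ha0 (integral_nonneg fun _ => sq_nonneg _) hvar_step t

/-- Cumulative variance of DP-SGD: for a `μ`-strongly convex, `β`-smooth loss `F`
with gradient `G`, the expected squared distance between the noisy iterates
`θ̃` (receiving independent mean-zero noise `(η/K) • N t` at step `t`) and the
noiseless gradient-descent iterates `θ` is at least
`((a^t − 1)/(a − 1)) · η²σ²/K²` where `a = 1 − 2ηβ + η²μ²`. -/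
theorem cumulative_variance
    {E : Type*} [NormedAddCommGroup E] [InnerProductSpace ℝ E]
    [FiniteDimensional ℝ E] [MeasurableSpace E] [BorelSpace E]
    {Ω : Type*} [MeasurableSpace Ω] (P : Measure Ω) [IsProbabilityMeasure P]
    (F : E → ℝ) (G : E → E) (hF : ∀ x : E, HasGradientAt F (G x) x)
    (β μ : ℝ) (hβ : 0 ≤ β) (hμ : 0 ≤ μ)
    (hsmooth : ∀ u v : E, ‖G u - G v‖ ≤ β * ‖u - v‖)
    (hconv : ∀ u v : E, μ * ‖u - v‖ ≤ ‖G u - G v‖)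
    (η : ℝ) (hη : 0 ≤ η) (K : ℝ) (hK : 0 < K)
    (a : ℝ) (ha : a = 1 - 2 * η * β + η ^ 2 * μ ^ 2) (ha0 : 0 ≤ a) (ha1 : a ≠ 1)
    (σ : ℝ) (N : ℕ → Ω → E)
    (hNmem : ∀ t : ℕ, MemLp (N t) 2 P)
    (hNmean : ∀ t : ℕ, ∫ ω, N t ω ∂P = 0)
    (hNvar : ∀ t : ℕ, ∫ ω, ‖N t ω‖ ^ 2 ∂P = σ ^ 2)
    (hNindep : ∀ t : ℕ, IndepFun (N t) (fun ω => fun i : Fin t => N i ω) P)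
    (θ : ℕ → E) (hθ : ∀ t : ℕ, θ (t + 1) = θ t - η • G (θ t))
    (θt : ℕ → Ω → E) (hθt0 : ∀ ω : Ω, θt 0 ω = θ 0)
    (hθt : ∀ t : ℕ, ∀ ω : Ω,
      θt (t + 1) ω = θt t ω - η • G (θt t ω) + (η / K) • N t ω) :
    ∀ t : ℕ, ((a ^ t - 1) / (a - 1)) * (η ^ 2 * σ ^ 2 / K ^ 2) ≤
      ∫ ω, ‖θt t ω - θ t‖ ^ 2 ∂P :=
  cumulative_variance_general P G β μ hμ hsmooth hconv η hη K a ha ha0 ha1 σ N hNmem hNmean hNvar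
    hNindep θ hθ θt hθt0 hθt
end
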